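/- For A = exp(ω̃) with ω ∈ ℝ³, the skew-symmetric part satisfies A - Aᵀ = 2 (sin‖ω‖/‖ω‖) ω̃ (for ω ≠ 0); consequently, if 0 < ‖ω‖ < π, then ω̃ = (‖ω‖ / (2 sin‖ω‖)) (A - Aᵀ), i.e. the SO(3)-logarithm formula recovers ω̃ from A. -/

import Mathlib

open Matrix Real

noncomputable def norm3 (ω : Fin 3 → ℝ) : ℝ := Real.sqrt (ω 0 ^ 2 + ω 1 ^ 2 + ω 2 ^ 2)

def skew (ω : Fin 3 → ℝ) : Matrix (Fin 3) (Fin 3) ℝ :=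
  !![0, -ω 2, ω 1; ω 2, 0, -ω 0; -ω 1, ω 0, 0]

/-! Since `ω̃ ^ 3 = -‖ω‖² • ω̃`, every odd power of `ω̃` is a multiple of `ω̃`, so the odd part
`exp ω̃ - exp (-ω̃) = exp ω̃ - (exp ω̃)ᵀ` of the exponential series is `ω̃` times the sine series
evaluated at `‖ω‖`, rescaled by `2 / ‖ω‖`. For `0 < ‖ω‖ < π` the coefficient `sin ‖ω‖` is
nonzero, which lets us solve for `ω̃`. -/

open scoped Nat
open NormedSpace

theorem pow_two_mul_add_one_of_pow_three_eq_smul {R A : Type*} [CommSemiring R] [Semiring A]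
    [Algebra R A] {x : A} {c : R} (h : x ^ 3 = c • x) (k : ℕ) :
    x ^ (2 * k + 1) = c ^ k • x := by
  induction k with
  | zero => simp
  | succ k ih =>
    calc x ^ (2 * (k + 1) + 1) = x ^ (2 * k + 1) * x ^ 2 := by rw [← pow_add]; ring_nf
      _ = c ^ k • x ^ 3 := by rw [ih, smul_mul_assoc, ← pow_succ']
      _ = c ^ (k + 1) • x := by rw [h, smul_smul, pow_succ]

theorem hasSum_exp_sub_exp_neg (𝕂 : Type*) {𝔸 : Type*} [RCLike 𝕂] [NormedRing 𝔸]
    [NormedAlgebra 𝕂 𝔸] [CompleteSpace 𝔸] (x : 𝔸) :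
    HasSum (fun k => (2 * ((2 * k + 1)! : 𝕂)⁻¹) • x ^ (2 * k + 1)) (exp x - exp (-x)) := by
  have h := (exp_series_hasSum_exp' (𝕂 := 𝕂) x).sub (exp_series_hasSum_exp' (𝕂 := 𝕂) (-x))
  have hinj : Function.Injective fun k : ℕ => 2 * k + 1 := fun a b hab => by simpa using hab
  have heven : ∀ n ∉ Set.range fun k : ℕ => 2 * k + 1,
      (n ! : 𝕂)⁻¹ • x ^ n - (n ! : 𝕂)⁻¹ • (-x) ^ n = 0 := by
    intro n hn
    have : Even n := Nat.not_odd_iff_even.mp fun ⟨k, hk⟩ => hn ⟨k, hk.symm⟩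
    rw [this.neg_pow, sub_self]
  convert (hinj.hasSum_iff heven).mpr h using 1
  funext k
  rw [Function.comp_apply, (odd_two_mul_add_one k).neg_pow, smul_neg, sub_neg_eq_add,
    ← two_smul 𝕂, smul_smul]

theorem exp_sub_exp_neg_of_pow_three_eq {𝔸 : Type*} [NormedRing 𝔸] [NormedAlgebra ℝ 𝔸]
    [CompleteSpace 𝔸] {x : 𝔸} {θ : ℝ} (hθ : θ ≠ 0)
    (h : x ^ 3 = -(θ ^ 2) • x) : exp x - exp (-x) = (2 * Real.sin θ / θ) • x := by
  refine (hasSum_exp_sub_exp_neg ℝ x).unique ?_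
  convert ((Real.hasSum_sin θ).mul_left (2 / θ)).smul_const x using 1
  · funext k
    rw [pow_two_mul_add_one_of_pow_three_eq_smul h, smul_smul, neg_pow, ← pow_mul]
    congr 1
    field_simp
    ring
  · ring_nf

theorem skew_transpose (ω : Fin 3 → ℝ) : (skew ω)ᵀ = -skew ω := by
  ext i j; fin_cases i <;> fin_cases j <;> simp [skew]

theorem norm3_sq (ω : Fin 3 → ℝ) : norm3 ω ^ 2 = ω 0 ^ 2 + ω 1 ^ 2 + ω 2 ^ 2 :=
  Real.sq_sqrt (by positivity)

theorem skew_pow_three (ω : Fin 3 → ℝ) : skew ω ^ 3 = -(norm3 ω ^ 2) • skew ω := by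
  rw [norm3_sq]
  ext i j
  fin_cases i <;> fin_cases j <;>
    simp [skew, pow_succ, Matrix.mul_apply, Fin.sum_univ_succ] <;> ring

theorem so3_log (ω : Fin 3 → ℝ) (h0 : 0 < norm3 ω) (hπ : norm3 ω < Real.pi) :
    NormedSpace.exp (skew ω) - (NormedSpace.exp (skew ω))ᵀ
        = (2 * Real.sin (norm3 ω) / norm3 ω) • skew ω ∧
      skew ω = (norm3 ω / (2 * Real.sin (norm3 ω))) •
        (NormedSpace.exp (skew ω) - (NormedSpace.exp (skew ω))ᵀ) := by
  -- `exp` does not depend on a norm; any Banach algebra norm gives access to the series.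
  let : NormedRing (Matrix (Fin 3) (Fin 3) ℝ) := Matrix.linftyOpNormedRing
  let : NormedAlgebra ℝ (Matrix (Fin 3) (Fin 3) ℝ) := Matrix.linftyOpNormedAlgebra
  have hsin : Real.sin (norm3 ω) ≠ 0 := (Real.sin_pos_of_pos_of_lt_pi h0 hπ).ne'
  have hodd : exp (skew ω) - (exp (skew ω))ᵀ = (2 * Real.sin (norm3 ω) / norm3 ω) • skew ω := by
    rw [← Matrix.exp_transpose, skew_transpose]
    exact exp_sub_exp_neg_of_pow_three_eq h0.ne' (skew_pow_three ω)
  refine ⟨hodd, ?_⟩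
  have hinv : norm3 ω / (2 * Real.sin (norm3 ω)) * (2 * Real.sin (norm3 ω) / norm3 ω) = 1 := by
    field_simp
  rw [hodd, smul_smul, hinv, one_smul]
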